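/- Let α ≥ ω₁ be a regular cardinal and 0 < n < ω. If C⁻(α,n) belongs to CH(⋃_{i∈I} 𝒜_i), where each 𝒜_i is a coreflective class of topological spaces, then there exists i₀ ∈ I such that C⁻(α,n) belongs to 𝒜_{i₀}. -/

import Mathlib

universe u v

/-- A class of topological spaces (in universe `u`): a predicate on spaces. -/
abbrev TopClass : Type (u + 1) := (X : Type u) → TopologicalSpace X → Prop

/-- A class of topological spaces is coreflective if it is closed under the formation of
topological sums and quotient spaces. -/
def IsCoreflective (C : TopClass.{u}) : Prop :=
  (∀ (ι : Type u) (X : ι → Type u) (t : (i : ι) → TopologicalSpace (X i)),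
      (∀ i, C (X i) (t i)) → C ((i : ι) × X i) (@instTopologicalSpaceSigma ι X t)) ∧
  (∀ (X Y : Type u) (tX : TopologicalSpace X) (tY : TopologicalSpace Y) (f : X → Y),
      @Topology.IsQuotientMap X Y tX tY f → C X tX → C Y tY)

/-- The coreflective hull of a class of spaces: the smallest coreflective class containing it. -/
def CH (A : TopClass.{u}) : TopClass.{u} :=
  fun X tX => ∀ C : TopClass.{u}, IsCoreflective C → (∀ Y tY, A Y tY → C Y tY) → C X tX

/-- `SCH A` is the class of all subspaces of members of `CH A`. -/
def SCH (A : TopClass.{u}) : TopClass.{u} :=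
  fun X tX => ∃ (Y : Type u) (tY : TopologicalSpace Y) (f : X → Y),
    CH A Y tY ∧ @Topology.IsEmbedding X Y tX tY f

/-- The class consisting of (the spaces homeomorphic to) a single space `A`. -/
def singleClass (A : Type u) (tA : TopologicalSpace A) : TopClass.{u} :=
  fun Y tY => Nonempty (@Homeomorph Y A tY tA)

/-- A class of topological spaces is hereditary if it is closed under subspaces. -/
def IsHereditary (C : TopClass.{u}) : Prop :=
  ∀ (X : Type u) (tX : TopologicalSpace X), C X tX →
    ∀ (Z : Type u) (tZ : TopologicalSpace Z) (f : Z → X), @Topology.IsEmbedding Z X tZ tX f →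
      C Z tZ

/-- The class `FG` of finitely generated (Alexandrov-discrete) topological spaces. -/
def FGClass : TopClass.{u} := fun X tX => @AlexandrovDiscrete X tX

/-- A filter space: a topological space with precisely one accumulation (non-isolated) point,
namely `a`. -/
def IsFilterSpace (X : Type u) [TopologicalSpace X] (a : X) : Prop :=
  ¬ IsOpen ({a} : Set X) ∧ ∀ x : X, x ≠ a → IsOpen ({x} : Set X)

/-- A filter subspace of a filter space `A` with accumulation point `a`: a subset containing `a`
such that `a` is in the closure of `B \ {a}`. -/
def IsFilterSubspace (A : Type u) [TopologicalSpace A] (a : A) (B : Set A) : Prop :=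
  a ∈ B ∧ a ∈ closure (B \ {a})

/-- `CIdx K m` represents the set `αⁿ` for `n = m+1`, where `K` plays the role of `α`. -/
def CIdx (K : Type u) : ℕ → Type u
  | 0 => K
  | m + 1 => K × CIdx K m

/-- Given a subset `U` of `(α × αⁿ) ∪ {∞}` and `ξ`, the set `{x ∈ αⁿ : (ξ,x) ∈ U} ∪ {∞}`. -/
def cslice {K J : Type u} (U : Set (Option (K × J))) (ξ : K) : Set (Option J) :=
  insert none (Option.some '' {x : J | Option.some (ξ, x) ∈ U})

/-- The openness predicate of the space `C⁻(α, m+1)`. -/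
def CIsOpen (K : Type u) : (m : ℕ) → Set (Option (CIdx K m)) → Prop
  | 0, U => none ∈ U → Cardinal.mk ((Option.some ⁻¹' U)ᶜ : Set K) < Cardinal.mk K
  | m + 1, U => none ∈ U →
      Cardinal.mk (({ξ : K | CIsOpen K m (cslice U ξ)}ᶜ : Set K)) < Cardinal.mk K

theorem cslice_mono {K J : Type u} {U V : Set (Option (K × J))} (h : U ⊆ V) (ξ : K) :
    cslice U ξ ⊆ cslice V ξ := by
  intro z hz
  rcases hz with hz | hz
  · exact Or.inl hz
  · rcases hz with ⟨x, hx, rfl⟩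
    exact Or.inr ⟨x, h hx, rfl⟩

theorem none_mem_cslice {K J : Type u} (U : Set (Option (K × J))) (ξ : K) :
    none ∈ cslice U ξ := Set.mem_insert _ _

theorem cisOpen_of_none_not_mem (K : Type u) (m : ℕ) (U : Set (Option (CIdx K m)))
    (h : none ∉ U) : CIsOpen K m U := by
  cases m with
  | zero => exact fun hU => absurd hU h
  | succ m => exact fun hU => absurd hU h

theorem cisOpen_mono (K : Type u) (m : ℕ) :
    ∀ U V : Set (Option (CIdx K m)), CIsOpen K m U → U ⊆ V → (none ∈ V → none ∈ U) →
      CIsOpen K m V := by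
  induction m with
  | zero =>
    intro U V hU hUV hnone hV
    refine lt_of_le_of_lt (Cardinal.mk_le_mk_of_subset ?_) (hU (hnone hV))
    intro k hk hU'
    exact hk (hUV hU')
  | succ m ih =>
    intro U V hU hUV hnone hV
    refine lt_of_le_of_lt (Cardinal.mk_le_mk_of_subset ?_) (hU (hnone hV))
    intro ξ hξ hopen
    exact hξ (ih _ _ hopen (cslice_mono hUV ξ) (fun _ => none_mem_cslice U ξ))

theorem cslice_univ {K J : Type u} (ξ : K) :
    cslice (Set.univ : Set (Option (K × J))) ξ = Set.univ := by
  ext z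
  cases z with
  | none => simp [cslice]
  | some j => simp [cslice]

theorem cisOpen_univ (K : Type u) [Nonempty K] (m : ℕ) : CIsOpen K m Set.univ := by
  cases m with
  | zero =>
    intro _
    show Cardinal.mk ((Option.some ⁻¹' (Set.univ : Set (Option K)))ᶜ : Set K) < Cardinal.mk K
    simp only [Set.preimage_univ, Set.compl_univ, Cardinal.mk_emptyCollection]
    exact Cardinal.mk_ne_zero K |>.bot_lt
  | succ m =>
    intro _
    have h : ({ξ : K | CIsOpen K m (cslice (Set.univ : Set (Option (CIdx K (m+1)))) ξ)}ᶜ : Set K)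
        = ∅ := by
      ext ξ
      simp only [Set.mem_compl_iff, Set.mem_setOf_eq, Set.mem_empty_iff_false, iff_false, not_not]
      have e : cslice (Set.univ : Set (Option (CIdx K (m+1)))) ξ = Set.univ := cslice_univ ξ
      rw [e]
      exact cisOpen_univ K m
    rw [h, Cardinal.mk_emptyCollection]
    exact Cardinal.mk_ne_zero K |>.bot_lt

theorem some_mem_cslice_iff {K J : Type u} (U : Set (Option (K × J))) (ξ : K) (x : J) :
    some x ∈ cslice U ξ ↔ some (ξ, x) ∈ U := by
  simp [cslice]

theorem cslice_inter {K J : Type u} (U V : Set (Option (K × J))) (ξ : K) :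
    cslice (U ∩ V) ξ = cslice U ξ ∩ cslice V ξ := by
  ext z
  cases z with
  | none => simp [none_mem_cslice]
  | some x => simp [some_mem_cslice_iff]

theorem cisOpen_inter (K : Type u) [Infinite K] (m : ℕ) :
    ∀ U V : Set (Option (CIdx K m)), CIsOpen K m U → CIsOpen K m V →
      CIsOpen K m (U ∩ V) := by
  induction m with
  | zero =>
    intro U V hU hV h
    have hsub : ((Option.some ⁻¹' (U ∩ V))ᶜ : Set K) ⊆
        (Option.some ⁻¹' U)ᶜ ∪ (Option.some ⁻¹' V)ᶜ := by
      intro k hk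
      by_contra hc
      exact hk (Set.mem_inter (not_not.mp (fun h1 => hc (Set.mem_union_left _ h1)))
        (not_not.mp (fun h2 => hc (Set.mem_union_right _ h2))))
    refine lt_of_le_of_lt (Cardinal.mk_le_mk_of_subset hsub) ?_
    refine lt_of_le_of_lt (Cardinal.mk_union_le _ _) ?_
    exact Cardinal.add_lt_of_lt (Cardinal.aleph0_le_mk K) (hU h.1) (hV h.2)
  | succ m ih =>
    intro U V hU hV h
    have hsub : ({ξ : K | CIsOpen K m (cslice (U ∩ V) ξ)}ᶜ : Set K) ⊆
        {ξ : K | CIsOpen K m (cslice U ξ)}ᶜ ∪ {ξ : K | CIsOpen K m (cslice V ξ)}ᶜ := by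
      intro ξ hξ
      by_contra hc
      simp only [Set.mem_union, Set.mem_compl_iff, Set.mem_setOf_eq, not_not] at hc hξ
      push_neg at hc
      have e : cslice (U ∩ V) ξ = cslice U ξ ∩ cslice V ξ := cslice_inter U V ξ
      exact hξ (by rw [e]; exact ih _ _ hc.1 hc.2)
    refine lt_of_le_of_lt (Cardinal.mk_le_mk_of_subset hsub) ?_
    refine lt_of_le_of_lt (Cardinal.mk_union_le _ _) ?_
    exact Cardinal.add_lt_of_lt (Cardinal.aleph0_le_mk K) (hU h.1) (hV h.2)

theorem cisOpen_sUnion (K : Type u) (m : ℕ) (S : Set (Set (Option (CIdx K m))))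
    (hS : ∀ U ∈ S, CIsOpen K m U) : CIsOpen K m (⋃₀ S) := by
  by_cases h : none ∈ ⋃₀ S
  · obtain ⟨U, hUS, hU⟩ := h
    exact cisOpen_mono K m U _ (hS U hUS) (Set.subset_sUnion_of_mem hUS) (fun _ => hU)
  · exact cisOpen_of_none_not_mem _ _ _ h

/-- The space `C⁻(α, m+1)` from the paper (so `m = 0` gives `C(α)` itself);
`K` plays the role of the set of ordinals `< α` and `none` plays the role of `∞`. -/
def CTop (K : Type u) [Infinite K] (m : ℕ) : TopologicalSpace (Option (CIdx K m)) where
  IsOpen := CIsOpen K m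
  isOpen_univ := cisOpen_univ K m
  isOpen_inter := cisOpen_inter K m
  isOpen_sUnion := cisOpen_sUnion K m

instance instCTop (K : Type u) [Infinite K] (m : ℕ) : TopologicalSpace (Option (CIdx K m)) :=
  CTop K m

/-!
A space in `CH A` carries the final topology for the continuous maps from members of `A`. As `∞`
is not isolated in `C⁻(α,n)`, some continuous `f : Y → C⁻(α,n)` with `Y` in some `𝒜 i₀` has
`f⁻¹{∞}` non-open. On the other hand `C⁻(α,n)` is very homogeneous: for every non-open `U ∋ ∞`
there is a continuous self-map `g` with `g⁻¹ U = {∞}`. So `C⁻(α,n)` is the quotient of the sum of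
copies of `Y` along all maps `g ∘ f` with `g` a continuous self-map, and it lies in `𝒜 i₀`.
-/

open Topology Cardinal

def IsGenerated (A : TopClass.{u}) (X : Type u) (tX : TopologicalSpace X) : Prop :=
  ∀ s : Set X, (∀ (Y : Type u) (tY : TopologicalSpace Y) (f : Y → X), A Y tY →
    Continuous[tY, tX] f → IsOpen[tY] (f ⁻¹' s)) → IsOpen[tX] s

theorem isCoreflective_isGenerated (A : TopClass.{u}) : IsCoreflective (IsGenerated A) := by
  constructor
  · intro ι X t hX s hs
    let := t
    refine isOpen_sigma_iff.mpr fun i => hX i _ fun Y tY f hY hf => ?_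
    exact hs Y tY (Sigma.mk i ∘ f) hY (continuous_sigmaMk.comp hf)
  · intro X Y tX tY q hq hX s hs
    let := tX; let := tY
    refine hq.isOpen_preimage.mp (hX _ fun Z tZ f hZ hf => ?_)
    exact hs Z tZ (q ∘ f) hZ (hq.continuous.comp hf)

theorem CH.isGenerated {A : TopClass.{u}} {X : Type u} {tX : TopologicalSpace X}
    (h : CH A X tX) : IsGenerated A X tX :=
  h _ (isCoreflective_isGenerated A) fun Y tY hY _ hs => hs Y tY id hY (@continuous_id Y tY)

theorem IsGenerated.exists_not_isOpen_preimage {A : TopClass.{u}} {X : Type u}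
    {tX : TopologicalSpace X} (h : IsGenerated A X tX) {s : Set X} (hs : ¬ IsOpen[tX] s) :
    ∃ (Y : Type u) (tY : TopologicalSpace Y) (f : Y → X),
      A Y tY ∧ Continuous[tY, tX] f ∧ ¬ IsOpen[tY] (f ⁻¹' s) := by
  by_contra! hcon
  exact hs (h s hcon)

/-- The sum is indexed by the continuous self-maps `g` of `X`; the constant ones make the
induced map surjective. -/
theorem IsCoreflective.mem_of_forall_not_isOpen {C : TopClass.{u}} (hC : IsCoreflective C)
    {X Y : Type u} [tX : TopologicalSpace X] [tY : TopologicalSpace Y] [Nonempty Y]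
    (hY : C Y tY) (f : Y → X) (hf : Continuous f)
    (H : ∀ V : Set X, ¬ IsOpen V → ∃ g : X → X, Continuous g ∧ ¬ IsOpen (f ⁻¹' (g ⁻¹' V))) :
    C X tX := by
  let F : (Σ _ : {g : X → X // Continuous g}, Y) → X := fun p => p.1.1 (f p.2)
  refine hC.2 _ _ _ _ F ?_ (hC.1 _ _ _ fun _ => hY)
  refine ⟨.of_isOpen_preimage_iff_isOpen fun V => ⟨fun hV => ?_, fun hV => isOpen_sigma_iff.mpr
    fun g => (g.2.comp hf).isOpen_preimage V hV⟩,
    fun x => ⟨⟨⟨fun _ => x, continuous_const⟩, Classical.arbitrary Y⟩, rfl⟩⟩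
  by_contra hVo
  obtain ⟨g, hg, hgV⟩ := H V hVo
  exact hgV (isOpen_sigma_iff.mp hV ⟨g, hg⟩)

theorem nonempty_equiv_of_not_mk_lt {K : Type u} {s : Set K} (h : ¬ #s < #K) :
    Nonempty (K ≃ s) :=
  Cardinal.eq.mp (le_antisymm (not_lt.mp h) (mk_set_le s))

theorem cslice_preimage_map {K J : Type u} (e : K → K) (g : K → J → J)
    (V : Set (Option (K × J))) (ξ : K) :
    cslice (Option.map (fun p => (e p.1, g p.1 p.2)) ⁻¹' V) ξ =
      Option.map (g ξ) ⁻¹' cslice V (e ξ) := by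
  ext z
  cases z <;> simp [none_mem_cslice, some_mem_cslice_iff]

theorem not_cisOpen_singleton_none (K : Type u) :
    ∀ m : ℕ, ¬ CIsOpen K m ({none} : Set (Option (CIdx K m)))
  | 0, h => by
    have h0 : #((Option.some ⁻¹' ({none} : Set (Option K)))ᶜ : Set K) < #K := h rfl
    have huniv : (Option.some ⁻¹' ({none} : Set (Option K)))ᶜ = Set.univ :=
      Set.eq_univ_of_forall Option.some_ne_none
    rw [huniv, mk_univ] at h0
    exact h0.false
  | m + 1, h => by
    have h1 : #({ξ : K | CIsOpen K m (cslice ({none} : Set (Option (K × CIdx K m))) ξ)}ᶜ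
        : Set K) < #K := h rfl
    have hslice (ξ : K) : cslice ({none} : Set (Option (K × CIdx K m))) ξ = {none} := by
      ext z
      cases z <;> simp [cslice]
    simp [hslice, not_cisOpen_singleton_none K m] at h1

/-- At level `0`, `g` maps `α` bijectively onto `α \ U`; at level `m+1` it maps the first coordinate
bijectively onto the `α`-sized set of bad slices of `U`, and acts on each fibre by the map
obtained for that slice. -/
theorem exists_map_avoiding_of_not_cisOpen {K : Type u} :
    ∀ {m : ℕ} {U : Set (Option (CIdx K m))}, ¬ CIsOpen K m U →
      ∃ g : CIdx K m → CIdx K m, (∀ x, some (g x) ∉ U) ∧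
        ∀ V, CIsOpen K m V → CIsOpen K m (Option.map g ⁻¹' V)
  | 0, U, hUo => by
    obtain ⟨e⟩ := nonempty_equiv_of_not_mk_lt fun h => hUo fun _ => h
    have he : Function.Injective fun ξ => (e ξ : K) := Subtype.val_injective.comp e.injective
    exact ⟨fun ξ => (e ξ : K), fun ξ => (e ξ).2, fun V hV hn =>
      (mk_preimage_of_injective _ _ he).trans_lt (hV hn)⟩
  | m + 1, U, hUo => by
    obtain ⟨e⟩ := nonempty_equiv_of_not_mk_lt fun h => hUo fun _ => h
    have he : Function.Injective fun ξ => (e ξ : K) := Subtype.val_injective.comp e.injective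
    choose g hgU hgV using fun ξ : K =>
      exists_map_avoiding_of_not_cisOpen (e ξ).2
    let G : CIdx K (m + 1) → CIdx K (m + 1) := fun p => ((e p.1 : K), g p.1 p.2)
    refine ⟨G, fun ⟨ξ, y⟩ hy => hgU ξ y ((some_mem_cslice_iff U _ _).mpr hy), fun V hV hn => ?_⟩
    have hbad : ({ξ : K | CIsOpen K m (cslice (Option.map G ⁻¹' V) ξ)}ᶜ : Set K) ⊆
        (fun ξ => (e ξ : K)) ⁻¹' {ξ : K | CIsOpen K m (cslice V ξ)}ᶜ := by
      intro ξ hξ hopen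
      have hslice : cslice (Option.map G ⁻¹' V) ξ = _ :=
        cslice_preimage_map (fun ξ => (e ξ : K)) g V ξ
      exact hξ (show CIsOpen K m _ by rw [hslice]; exact hgV ξ _ hopen)
    exact ((mk_le_mk_of_subset hbad).trans (mk_preimage_of_injective _ _ he)).trans_lt (hV hn)

theorem stmt15_general (K : Type u) [Infinite K] (m : ℕ)
    {I : Type v} (𝒜 : I → TopClass.{u}) (h𝒜 : ∀ i, IsCoreflective (𝒜 i))
    (h : CH (fun Y tY => ∃ i, 𝒜 i Y tY) (Option (CIdx K m)) (CTop K m)) :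
    ∃ i₀ : I, 𝒜 i₀ (Option (CIdx K m)) (CTop K m) := by
  obtain ⟨Y, tY, f, ⟨i₀, hY⟩, hf, hfY⟩ :=
    h.isGenerated.exists_not_isOpen_preimage (not_cisOpen_singleton_none K m)
  obtain ⟨y, -⟩ : (f ⁻¹' {none}).Nonempty :=
    Set.nonempty_iff_ne_empty.mpr fun he => hfY (he ▸ @isOpen_empty Y tY)
  have : Nonempty Y := ⟨y⟩
  refine ⟨i₀, (h𝒜 i₀).mem_of_forall_not_isOpen hY f hf fun V hV => ?_⟩
  have hnV : none ∈ V := by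
    by_contra hn
    exact hV (cisOpen_of_none_not_mem K m V hn)
  obtain ⟨g, hgV, hg⟩ := exists_map_avoiding_of_not_cisOpen hV
  have hpre : Option.map g ⁻¹' V = {none} := by
    ext z
    cases z with
    | none => simpa using hnV
    | some x => simpa using hgV x
  exact ⟨Option.map g, ⟨hg⟩, by rwa [hpre]⟩

/-- let `α ≥ ω₁` be regular (the cardinality of `K`) and `0 < n < ω`.  If
`C⁻(α,n)` belongs to `CH (⋃ i, 𝒜 i)` where each `𝒜 i` is coreflective, then `C⁻(α,n)` belongs
to some `𝒜 i₀`.  Here `CTop K m` is the space `C⁻(α, m+1)`. -/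
theorem stmt15 (K : Type u) [Infinite K] (hreg : (Cardinal.mk K).IsRegular)
    (hω1 : Cardinal.aleph 1 ≤ Cardinal.mk K) (m : ℕ)
    {I : Type v} (𝒜 : I → TopClass.{u}) (h𝒜 : ∀ i, IsCoreflective (𝒜 i))
    (h : CH (fun Y tY => ∃ i, 𝒜 i Y tY) (Option (CIdx K m)) (CTop K m)) :
    ∃ i₀ : I, 𝒜 i₀ (Option (CIdx K m)) (CTop K m) :=
  stmt15_general K m 𝒜 h𝒜 h
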